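/- (Theorem 2, concavity of the value function.) In the filter setup, fix a horizon T ≥ 1, functions g_k : Δ^N × 𝒰 → ℝ for 0 ≤ k ≤ T−1 such that π ↦ g_k(π,u) is concave on Δ^N for each u ∈ 𝒰, and a concave terminal cost g_T : Δ^N → ℝ. Define value functions by backward recursion: J_T(π) = g_T(π), and for 0 ≤ k ≤ T−1, J_k(π) = min_{u ∈ 𝒰} [ g_k(π,u) + Σ_{y ∈ 𝒴, σ(π,u,y) > 0} σ(π,u,y) · J_{k+1}( Π(π,u,y) ) ]. Then J_k is concave on Δ^N for every 0 ≤ k ≤ T. -/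

import Mathlib

/-!
The term `σ(π,u,y) · J(Π(π,u,y))` of the backup is the perspective `(t, v) ↦ t · J(t⁻¹ • v)` of `J`
evaluated at `(σ(π,u,y), 𝐓(π,u,y))`, which depends linearly on `π`. The perspective of a concave
function is concave (it is positively homogeneous and, by concavity of `J`, superadditive), and
concavity survives linear substitution, finite sums and finite minima; backward induction from
`J_T = g_T` then gives concavity of every `J_k`.
-/

open Finset

/-- The probability simplex `Δ^N` in `ℝ^N`. -/
def stdSimplex' (N : ℕ) : Set (Fin N → ℝ) :=
  {π | (∀ i, 0 ≤ π i) ∧ ∑ i, π i = 1}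

/-- Unnormalised Bayesian filter update `𝐓(π,u,y)_i = B(y|i,u) Σ_j A_{ij}(u) π_j`. -/
noncomputable def Tvec {N : ℕ} {U Y : Type*} [Fintype Y]
    (A : U → Fin N → Fin N → ℝ) (B : Y → Fin N → U → ℝ)
    (π : Fin N → ℝ) (u : U) (y : Y) : Fin N → ℝ :=
  fun i => B y i u * ∑ j, A u i j * π j

/-- The normaliser `σ(π,u,y) = Σ_i 𝐓(π,u,y)_i`. -/
noncomputable def sigNorm {N : ℕ} {U Y : Type*} [Fintype Y]
    (A : U → Fin N → Fin N → ℝ) (B : Y → Fin N → U → ℝ)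
    (π : Fin N → ℝ) (u : U) (y : Y) : ℝ :=
  ∑ i, Tvec A B π u y i

/-- The belief update `Π(π,u,y) = 𝐓(π,u,y) / σ(π,u,y)`. -/
noncomputable def belUpd {N : ℕ} {U Y : Type*} [Fintype Y]
    (A : U → Fin N → Fin N → ℝ) (B : Y → Fin N → U → ℝ)
    (π : Fin N → ℝ) (u : U) (y : Y) : Fin N → ℝ :=
  fun i => Tvec A B π u y i / sigNorm A B π u y

open scoped Classical in
/-- The Bellman-backup expectation `Σ_{y : σ(π,u,y) > 0} σ(π,u,y) · J(Π(π,u,y))`. -/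
noncomputable def backup {N : ℕ} {U Y : Type*} [Fintype Y]
    (A : U → Fin N → Fin N → ℝ) (B : Y → Fin N → U → ℝ)
    (J : (Fin N → ℝ) → ℝ) (π : Fin N → ℝ) (u : U) : ℝ :=
  ∑ y : Y, if 0 < sigNorm A B π u y then sigNorm A B π u y * J (belUpd A B π u y) else 0

section FinsetConcave

variable {𝕜 E β ι : Type*} [Semiring 𝕜] [PartialOrder 𝕜] [AddCommMonoid E] [AddCommMonoid β]
  {s : Set E} {t : Finset ι} {f : ι → E → β}

theorem ConcaveOn.finset_inf' [SMul 𝕜 E] [LinearOrder β] [IsOrderedAddMonoid β] [Module 𝕜 β]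
    [PosSMulStrictMono 𝕜 β] (ht : t.Nonempty) (hf : ∀ i ∈ t, ConcaveOn 𝕜 s (f i)) :
    ConcaveOn 𝕜 s (fun x => t.inf' ht fun i => f i x) := by
  simpa only [← Finset.inf'_apply] using
    Finset.inf'_induction ht f (fun _ h₁ _ h₂ => h₁.inf h₂) hf

theorem ConcaveOn.finset_sum [Module 𝕜 E] [PartialOrder β] [IsOrderedAddMonoid β] [Module 𝕜 β]
    (hs : Convex 𝕜 s) (hf : ∀ i ∈ t, ConcaveOn 𝕜 s (f i)) :
    ConcaveOn 𝕜 s (fun x => ∑ i ∈ t, f i x) := by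
  simpa only [← Finset.sum_apply] using
    Finset.sum_induction f (ConcaveOn 𝕜 s) (fun _ _ h₁ h₂ => h₁.add h₂) (concaveOn_const 0 hs) hf

end FinsetConcave

section Perspective

variable {F : Type*} [AddCommGroup F] [Module ℝ F]

-- Set to `0` for `t ≤ 0`, matching the restriction to `σ > 0` in `backup`.
noncomputable def perspective (f : F → ℝ) (p : ℝ × F) : ℝ :=
  if 0 < p.1 then p.1 * f (p.1⁻¹ • p.2) else 0

def perspectiveCone (s : Set F) : Set (ℝ × F) :=
  insert 0 {p | 0 < p.1 ∧ p.1⁻¹ • p.2 ∈ s}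

theorem perspective_smul (f : F → ℝ) {a : ℝ} (ha : 0 ≤ a) (p : ℝ × F) :
    perspective f (a • p) = a * perspective f p := by
  rcases ha.eq_or_lt with rfl | ha
  · simp [perspective]
  simp only [perspective, Prod.smul_fst, Prod.smul_snd, smul_eq_mul, mul_pos_iff_of_pos_left ha]
  split_ifs with hp
  · rw [mul_inv_rev, mul_smul, inv_smul_smul₀ ha.ne', mul_assoc]
  · rw [mul_zero]

theorem inv_add_smul_add_eq_combo {t₁ t₂ : ℝ} (h₁ : 0 < t₁) (h₂ : 0 < t₂) (v₁ v₂ : F) :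
    (t₁ + t₂)⁻¹ • (v₁ + v₂) =
      (t₁ / (t₁ + t₂)) • (t₁⁻¹ • v₁) + (t₂ / (t₁ + t₂)) • (t₂⁻¹ • v₂) := by
  have hc : ∀ {t : ℝ}, 0 < t → t / (t₁ + t₂) * t⁻¹ = (t₁ + t₂)⁻¹ := fun ht => by field_simp
  rw [smul_smul, smul_smul, hc h₁, hc h₂, smul_add]

variable {s : Set F}

theorem smul_mem_perspectiveCone {a : ℝ} (ha : 0 ≤ a) {p : ℝ × F} (hp : p ∈ perspectiveCone s) :
    a • p ∈ perspectiveCone s := by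
  rcases ha.eq_or_lt with rfl | ha
  · simp [perspectiveCone]
  rcases hp with rfl | ⟨hp₁, hp₂⟩
  · simp [perspectiveCone]
  refine Or.inr ⟨mul_pos ha hp₁, ?_⟩
  rwa [Prod.smul_fst, Prod.smul_snd, smul_eq_mul, mul_inv_rev, mul_smul, inv_smul_smul₀ ha.ne']

theorem add_mem_perspectiveCone (hs : Convex ℝ s) {p q : ℝ × F} (hp : p ∈ perspectiveCone s)
    (hq : q ∈ perspectiveCone s) : p + q ∈ perspectiveCone s := by
  rcases hp with rfl | ⟨hp₁, hp₂⟩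
  · rwa [zero_add]
  rcases hq with rfl | ⟨hq₁, hq₂⟩
  · rw [add_zero]; exact Or.inr ⟨hp₁, hp₂⟩
  refine Or.inr ⟨add_pos hp₁ hq₁, ?_⟩
  rw [Prod.fst_add, Prod.snd_add, inv_add_smul_add_eq_combo hp₁ hq₁]
  exact hs hp₂ hq₂ (by positivity) (by positivity) (by field_simp)

theorem convex_perspectiveCone (hs : Convex ℝ s) : Convex ℝ (perspectiveCone s) :=
  fun _ hp _ hq _ _ ha hb _ =>
    add_mem_perspectiveCone hs (smul_mem_perspectiveCone ha hp) (smul_mem_perspectiveCone hb hq)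

theorem ConcaveOn.perspective_add_le {f : F → ℝ} (hf : ConcaveOn ℝ s f) {p q : ℝ × F}
    (hp : p ∈ perspectiveCone s) (hq : q ∈ perspectiveCone s) :
    perspective f p + perspective f q ≤ perspective f (p + q) := by
  rcases hp with rfl | ⟨hp₁, hp₂⟩
  · simp [perspective]
  rcases hq with rfl | ⟨hq₁, hq₂⟩
  · simp [perspective]
  have hpq : 0 < p.1 + q.1 := add_pos hp₁ hq₁
  have hcomb := hf.2 hp₂ hq₂ (div_pos hp₁ hpq).le (div_pos hq₁ hpq).le (by field_simp)
  simp only [perspective, Prod.fst_add, Prod.snd_add, if_pos hp₁, if_pos hq₁, if_pos hpq,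
    inv_add_smul_add_eq_combo hp₁ hq₁, smul_eq_mul] at hcomb ⊢
  calc p.1 * f (p.1⁻¹ • p.2) + q.1 * f (q.1⁻¹ • q.2)
      = (p.1 + q.1) * (p.1 / (p.1 + q.1) * f (p.1⁻¹ • p.2) +
          q.1 / (p.1 + q.1) * f (q.1⁻¹ • q.2)) := by field_simp
    _ ≤ _ := mul_le_mul_of_nonneg_left hcomb hpq.le

/-- A positively homogeneous function is concave as soon as it is superadditive. -/
theorem ConcaveOn.perspective {f : F → ℝ} (hf : ConcaveOn ℝ s f) :
    ConcaveOn ℝ (perspectiveCone s) (perspective f) := by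
  refine ⟨convex_perspectiveCone hf.1, fun p hp q hq a b ha hb _ => ?_⟩
  rw [smul_eq_mul, smul_eq_mul, ← perspective_smul f ha, ← perspective_smul f hb]
  exact hf.perspective_add_le (smul_mem_perspectiveCone ha hp) (smul_mem_perspectiveCone hb hq)

end Perspective

theorem convex_stdSimplex' (N : ℕ) : Convex ℝ (stdSimplex' N) :=
  convex_stdSimplex ℝ (Fin N)

section Filter

variable {N : ℕ} {U Y : Type*} [Fintype Y] {A : U → Fin N → Fin N → ℝ} {B : Y → Fin N → U → ℝ}

variable (A B) in
/-- `π ↦ (σ(π,u,y), 𝐓(π,u,y))`, whose perspective normalisation `σ⁻¹ • 𝐓` is the belief update. -/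
noncomputable def filterLinearMap (u : U) (y : Y) : (Fin N → ℝ) →ₗ[ℝ] ℝ × (Fin N → ℝ) where
  toFun π := (sigNorm A B π u y, Tvec A B π u y)
  map_add' π ρ := by
    ext <;> simp only [sigNorm, Tvec, Pi.add_apply, mul_add, sum_add_distrib, Prod.fst_add,
      Prod.snd_add]
  map_smul' c π := by
    ext <;> simp only [sigNorm, Tvec, Pi.smul_apply, smul_eq_mul, mul_sum, Prod.smul_fst,
      Prod.smul_snd, RingHom.id_apply, mul_left_comm]

@[simp]
theorem filterLinearMap_apply (u : U) (y : Y) (π : Fin N → ℝ) :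
    filterLinearMap A B u y π = (sigNorm A B π u y, Tvec A B π u y) :=
  rfl

theorem Tvec_nonneg (hA : ∀ u i j, 0 ≤ A u i j) (hB : ∀ y i u, 0 ≤ B y i u)
    {π : Fin N → ℝ} (hπ : ∀ i, 0 ≤ π i) (u : U) (y : Y) (i : Fin N) :
    0 ≤ Tvec A B π u y i :=
  mul_nonneg (hB y i u) (sum_nonneg fun j _ => mul_nonneg (hA u i j) (hπ j))

theorem filterLinearMap_mem_perspectiveCone (hA : ∀ u i j, 0 ≤ A u i j)
    (hB : ∀ y i u, 0 ≤ B y i u) {π : Fin N → ℝ} (hπ : π ∈ stdSimplex' N) (u : U) (y : Y) :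
    filterLinearMap A B u y π ∈ perspectiveCone (stdSimplex' N) := by
  have hT := Tvec_nonneg hA hB hπ.1 u y
  have hσ : 0 ≤ sigNorm A B π u y := sum_nonneg fun i _ => hT i
  rcases hσ.eq_or_lt with hσ | hσ
  · refine Or.inl (Prod.ext hσ.symm (funext fun i => ?_))
    exact (sum_eq_zero_iff_of_nonneg fun i _ => hT i).1 hσ.symm i (mem_univ i)
  refine Or.inr ⟨hσ, fun i => mul_nonneg (inv_nonneg.2 hσ.le) (hT i), ?_⟩
  change ∑ i, (sigNorm A B π u y)⁻¹ * Tvec A B π u y i = 1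
  rw [← mul_sum]
  exact inv_mul_cancel₀ hσ.ne'

theorem backup_eq_sum_perspective (f : (Fin N → ℝ) → ℝ) (π : Fin N → ℝ) (u : U) :
    backup A B f π u = ∑ y, perspective f (filterLinearMap A B u y π) := by
  refine sum_congr rfl fun y _ => ?_
  rw [filterLinearMap_apply, perspective]
  by_cases hσ : 0 < sigNorm A B π u y
  · rw [if_pos hσ, if_pos hσ]
    congr 2
    funext i
    exact div_eq_inv_mul _ _
  · rw [if_neg hσ, if_neg hσ]

theorem ConcaveOn.backup (hA : ∀ u i j, 0 ≤ A u i j) (hB : ∀ y i u, 0 ≤ B y i u)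
    {f : (Fin N → ℝ) → ℝ} (hf : ConcaveOn ℝ (stdSimplex' N) f) (u : U) :
    ConcaveOn ℝ (stdSimplex' N) (fun π => backup A B f π u) := by
  simp only [backup_eq_sum_perspective]
  refine ConcaveOn.finset_sum (convex_stdSimplex' N) fun y _ => ?_
  exact (hf.perspective.comp_linearMap (filterLinearMap A B u y)).subset
    (fun π hπ => filterLinearMap_mem_perspectiveCone hA hB hπ u y) (convex_stdSimplex' N)

end Filter

theorem value_function_concave_general
    (N : ℕ) (U Y : Type) [Fintype U] [Fintype Y]
    (A : U → Fin N → Fin N → ℝ) (B : Y → Fin N → U → ℝ)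
    (hA : ∀ u i j, 0 ≤ A u i j)
    (hB : ∀ y i u, 0 ≤ B y i u)
    [Nonempty U]
    (T : ℕ)
    (g : ℕ → (Fin N → ℝ) → U → ℝ) (gT : (Fin N → ℝ) → ℝ)
    (hg : ∀ k < T, ∀ u : U, ConcaveOn ℝ (stdSimplex' N) (fun π => g k π u))
    (hgT : ConcaveOn ℝ (stdSimplex' N) gT)
    (J : ℕ → (Fin N → ℝ) → ℝ)
    (hJT : ∀ π ∈ stdSimplex' N, J T π = gT π)
    (hJk : ∀ k < T, ∀ π ∈ stdSimplex' N,
      J k π = Finset.univ.inf' Finset.univ_nonempty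
        (fun u : U => g k π u + backup A B (J (k + 1)) π u)) :
    ∀ k ≤ T, ConcaveOn ℝ (stdSimplex' N) (J k) := by
  intro k hk
  induction hk using Nat.decreasingInduction with
  | self => exact hgT.congr fun π hπ => (hJT π hπ).symm
  | of_succ k hk hnext =>
    have hbellman := ConcaveOn.finset_inf' univ_nonempty fun u _ =>
      (hg k hk u).add (hnext.backup hA hB u)
    exact hbellman.congr fun π hπ => (hJk k hk π hπ).symm

/-- **Theorem 2 (concavity of the value function).**  With concave instantaneous costs
`g_k(·,u)` and concave terminal cost `g_T`, the value functions defined by the backward recursion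
`J_T = g_T`, `J_k(π) = min_u [ g_k(π,u) + Σ_{y : σ(π,u,y) > 0} σ(π,u,y) J_{k+1}(Π(π,u,y)) ]`
are concave on `Δ^N` for every `0 ≤ k ≤ T`. -/
theorem value_function_concave
    (N : ℕ) (U Y : Type) [Fintype U] [Fintype Y]
    (A : U → Fin N → Fin N → ℝ) (B : Y → Fin N → U → ℝ)
    (hA : ∀ u i j, 0 ≤ A u i j) (hAcol : ∀ u j, ∑ i, A u i j = 1)
    (hB : ∀ y i u, 0 ≤ B y i u) (hBsum : ∀ i u, ∑ y, B y i u = 1)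
    [Nonempty U]
    (T : ℕ) (hT : 1 ≤ T)
    (g : ℕ → (Fin N → ℝ) → U → ℝ) (gT : (Fin N → ℝ) → ℝ)
    (hg : ∀ k < T, ∀ u : U, ConcaveOn ℝ (stdSimplex' N) (fun π => g k π u))
    (hgT : ConcaveOn ℝ (stdSimplex' N) gT)
    (J : ℕ → (Fin N → ℝ) → ℝ)
    (hJT : ∀ π ∈ stdSimplex' N, J T π = gT π)
    (hJk : ∀ k < T, ∀ π ∈ stdSimplex' N,
      J k π = Finset.univ.inf' Finset.univ_nonempty
        (fun u : U => g k π u + backup A B (J (k + 1)) π u)) :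
    ∀ k ≤ T, ConcaveOn ℝ (stdSimplex' N) (J k) :=
  value_function_concave_general N U Y A B hA hB T g gT hg hgT J hJT hJk
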